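/- Let S = R ∪ B be a two-colored finite point set in ℝ² and let H ⊆ R₁ be a finite set of rectangles such that no two elements of H have a piercing intersection or a corner intersection. Then there exists a subset I ⊆ H of pairwise-disjoint rectangles with 2·|I| ≥ |H|. -/

import Mathlib

open Set

/-- Points of the plane. -/
abbrev Pt : Type := ℝ × ℝ

/-- `D a b` is the closed axis-aligned rectangle having the segment from `a` to `b`
as a diagonal, i.e. the minimum enclosing axis-aligned rectangle of `a` and `b`. -/
def D (a b : Pt) : Set Pt :=
  Set.Icc (min a.1 b.1) (max a.1 b.1) ×ˢ Set.Icc (min a.2 b.2) (max a.2 b.2)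

/-- `Pierces R₂ R₁` : the projection of `R₁` onto the x-axis contains that of `R₂`,
and the projection of `R₂` onto the y-axis contains that of `R₁`. -/
def Pierces (R₂ R₁ : Set Pt) : Prop :=
  Prod.fst '' R₂ ⊆ Prod.fst '' R₁ ∧ Prod.snd '' R₁ ⊆ Prod.snd '' R₂

/-- Two rectangles have a piercing intersection if one of them pierces the other. -/
def PiercingInter (A B : Set Pt) : Prop := Pierces A B ∨ Pierces B A

/-- The four corner points of an axis-aligned rectangle given as a set. -/
def corners (A : Set Pt) : Set Pt :=
  {c | (c.1 = sInf (Prod.fst '' A) ∨ c.1 = sSup (Prod.fst '' A)) ∧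
       (c.2 = sInf (Prod.snd '' A) ∨ c.2 = sSup (Prod.snd '' A))}

/-- `A` and `B` have a corner intersection (w.r.t. the point set `P`):
each rectangle contains exactly one of the corner points of the other,
and these two contained corners are not elements of `P`. -/
def CornerInter (P : Set Pt) (A B : Set Pt) : Prop :=
  (∃! c, c ∈ corners B ∧ c ∈ A) ∧ (∃! c, c ∈ corners A ∧ c ∈ B) ∧
  ∀ c, ((c ∈ corners B ∧ c ∈ A) ∨ (c ∈ corners A ∧ c ∈ B)) → c ∉ P

/-- `A` and `B` have a point intersection: their intersection is precisely
a single point of `P`. -/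
def PointInter (P : Set Pt) (A B : Set Pt) : Prop := ∃ s ∈ P, A ∩ B = {s}

/-- `A` is a rectangle on the point set `P`. -/
def IsRectOn (P : Set Pt) (A : Set Pt) : Prop :=
  ∃ a b, a ∈ P ∧ b ∈ P ∧ a ≠ b ∧ A = D a b ∧ A ∩ P = {a, b}

/-- A complete set of rectangles on `P`: for every two elements `D a b`, `D a' b'`
of `H` that have a corner intersection, the other two rectangles of the form
`D p q` (with `p ∈ {a,a'}`, `q ∈ {b,b'}`) having a piercing intersection with
each other also belong to `H`. -/
def CompleteOn (P : Set Pt) (H : Set (Set Pt)) : Prop :=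
  (∀ A ∈ H, IsRectOn P A) ∧
  ∀ a b a' b' : Pt, a ∈ P → b ∈ P → a' ∈ P → b' ∈ P →
    D a b ∈ H → D a' b' ∈ H → CornerInter P (D a b) (D a' b') →
    PiercingInter (D a b') (D a' b) →
    D a b' ∈ H ∧ D a' b ∈ H

/-- Adjacency in the graph `G_{p,c}(H)` : a piercing or a corner intersection. -/
def AdjPC (P : Set Pt) (A B : Set Pt) : Prop := PiercingInter A B ∨ CornerInter P A B

/-- `I` is an independent set of the graph `G_{p,c}(H)`. -/
def IndepPC (P : Set Pt) (H I : Set (Set Pt)) : Prop :=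
  I ⊆ H ∧ I.Pairwise fun A B => ¬ AdjPC P A B

/-- The maximum size of an independent set of the graph `G_{p,c}(H)`. -/
noncomputable def maxIndepPC (P : Set Pt) (H : Set (Set Pt)) : ℕ :=
  sSup {n | ∃ I, IndepPC P H I ∧ I.ncard = n}

/-- The family `𝓡(S)` of monochromatic rectangles of the two-colored point set
`S = R ∪ B`: rectangles `D p q` with `p,q` distinct points of the same color
containing no point of `S` other than `p` and `q`. -/
def RS (R B : Set Pt) : Set (Set Pt) :=
  {A | ∃ p q, ((p ∈ R ∧ q ∈ R) ∨ (p ∈ B ∧ q ∈ B)) ∧ p ≠ q ∧ A = D p q ∧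
    A ∩ (R ∪ B) = {p, q}}

/-- The blue rectangles of `𝓡(S)` having a point of `S` at their bottom-left corner. -/
def Fam1Blue (R B : Set Pt) : Set (Set Pt) :=
  {A | ∃ p q, p ∈ B ∧ q ∈ B ∧ p ≠ q ∧ A = D p q ∧ A ∩ (R ∪ B) = {p, q} ∧
    (min p.1 q.1, min p.2 q.2) ∈ R ∪ B}

/-- The red rectangles of `𝓡(S)` having a point of `S` at their bottom-right corner. -/
def Fam1Red (R B : Set Pt) : Set (Set Pt) :=
  {A | ∃ p q, p ∈ R ∧ q ∈ R ∧ p ≠ q ∧ A = D p q ∧ A ∩ (R ∪ B) = {p, q} ∧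
    (max p.1 q.1, min p.2 q.2) ∈ R ∪ B}

/-- The family `𝓡₁`. -/
def Fam1 (R B : Set Pt) : Set (Set Pt) := Fam1Blue R B ∪ Fam1Red R B

/-- The family `𝓡₂`: blue rectangles with a point of `S` at the bottom-right corner
together with red rectangles with a point of `S` at the bottom-left corner. -/
def Fam2 (R B : Set Pt) : Set (Set Pt) :=
  {A | ∃ p q, p ∈ B ∧ q ∈ B ∧ p ≠ q ∧ A = D p q ∧ A ∩ (R ∪ B) = {p, q} ∧
    (max p.1 q.1, min p.2 q.2) ∈ R ∪ B} ∪
  {A | ∃ p q, p ∈ R ∧ q ∈ R ∧ p ≠ q ∧ A = D p q ∧ A ∩ (R ∪ B) = {p, q} ∧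
    (min p.1 q.1, min p.2 q.2) ∈ R ∪ B}

/-- The maximum size of a subfamily of `H` consisting of pairwise-disjoint rectangles. -/
noncomputable def maxDisjoint (H : Set (Set Pt)) : ℕ :=
  sSup {n | ∃ I ⊆ H, I.Pairwise (fun A B => A ∩ B = ∅) ∧ I.ncard = n}


/-!
Orient every rectangle of `𝓡₁` from its left spanning point `u` (the tail) to its right spanning
point `v` (the head); after flipping the `y`-axis for red points the head lies to the upper right of
the tail. Two intersecting rectangles spanned by points of `S` share a point of `S` unless they have
a piercing or a corner intersection, and since a rectangle of `𝓡(S)` meets `S` only in its spanning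
points, two intersecting members of `H` share a spanning point. They cannot share their tails or
their heads, since they would then sit in the same corner and one would pierce the other. Hence
every intersecting pair is linked by "the head of one is the tail of the other". This relation is
functional and strictly increases the potential `x + y` of the spanning points, so greedily keeping
a rectangle of least potential and discarding its successor produces a disjoint subfamily of at
least half the size.
-/

lemma D_eq_uIcc_prod (a b : Pt) : D a b = uIcc a.1 b.1 ×ˢ uIcc a.2 b.2 := rfl

lemma D_comm (a b : Pt) : D a b = D b a := by
  rw [D_eq_uIcc_prod, D_eq_uIcc_prod, uIcc_comm a.1, uIcc_comm a.2]

lemma left_mem_D (a b : Pt) : a ∈ D a b := ⟨left_mem_uIcc, left_mem_uIcc⟩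

lemma right_mem_D (a b : Pt) : b ∈ D a b := ⟨right_mem_uIcc, right_mem_uIcc⟩

lemma corners_D (a b : Pt) : corners (D a b) = ({a.1, b.1} : Set ℝ) ×ˢ ({a.2, b.2} : Set ℝ) := by
  have endpoints (x y z : ℝ) :
      (z = sInf (uIcc x y) ∨ z = sSup (uIcc x y)) ↔ z ∈ ({x, y} : Set ℝ) := by
    rw [uIcc, csInf_Icc inf_le_sup, csSup_Icc inf_le_sup]
    rcases le_total x y with h | h <;> simp [h, or_comm]
  ext c
  simp only [corners, D_eq_uIcc_prod, fst_image_prod _ nonempty_uIcc,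
    snd_image_prod nonempty_uIcc, endpoints, mem_ofPred_eq, mem_prod]

lemma corners_D_subset (a b : Pt) : corners (D a b) ⊆ D a b := by
  rw [corners_D, D_eq_uIcc_prod]
  exact prod_mono (pair_subset left_mem_uIcc right_mem_uIcc)
    (pair_subset left_mem_uIcc right_mem_uIcc)

lemma corners_D_inter_D (a b a' b' : Pt) :
    corners (D a' b') ∩ D a b =
      (({a'.1, b'.1} : Set ℝ) ∩ uIcc a.1 b.1) ×ˢ (({a'.2, b'.2} : Set ℝ) ∩ uIcc a.2 b.2) := by
  rw [corners_D, D_eq_uIcc_prod, prod_inter_prod]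

lemma pierces_prod {I I' J J' : Set ℝ} (hI : I.Nonempty) (hJ' : J'.Nonempty)
    (hx : I ⊆ I') (hy : J' ⊆ J) : Pierces (I ×ˢ J) (I' ×ˢ J') :=
  ⟨(fst_image_prod_subset I J).trans (hx.trans (fst_image_prod I' hJ').symm.subset),
    (snd_image_prod_subset I' J').trans (hy.trans (snd_image_prod hI J).symm.subset)⟩

lemma exists_mem_inter_of_not_cornerInter {S A B : Set Pt} {c c' : Pt}
    (hA : corners A ⊆ A) (hB : corners B ⊆ B)
    (h : corners B ∩ A = {c}) (h' : corners A ∩ B = {c'}) (hc : ¬ CornerInter S A B) :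
    ∃ w ∈ S, w ∈ A ∩ B := by
  by_contra! hno
  have unique {X Y : Set Pt} {d : Pt} (h : corners Y ∩ X = {d}) :
      ∃! y, y ∈ corners Y ∧ y ∈ X := by
    simpa only [← mem_inter_iff, h, mem_singleton_iff] using existsUnique_eq
  refine hc ⟨unique h, unique h', ?_⟩
  rintro x (hx | hx) hxS
  · exact hno x hxS ⟨hx.2, hB hx.1⟩
  · exact hno x hxS ⟨hA hx.1, hx.2⟩

lemma pair_inter_Icc_eq_singleton {a b a' b' : ℝ} (h₁ : a < a') (h₂ : a' ≤ b) (h₃ : b < b') :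
    ({a, b} : Set ℝ) ∩ Icc a' b' = {b} ∧ ({a', b'} : Set ℝ) ∩ Icc a b = {a'} := by
  constructor <;> ext x <;> simp only [mem_inter_iff, mem_insert_iff, mem_singleton_iff, mem_Icc] <;>
    constructor <;> grind

lemma uIcc_subset_or_subset_or_crossing {a b a' b' x : ℝ} (hx : x ∈ uIcc a b) (hx' : x ∈ uIcc a' b') :
    uIcc a b ⊆ uIcc a' b' ∨ uIcc a' b' ⊆ uIcc a b ∨
      ∃ e e', ({a, b} : Set ℝ) ∩ uIcc a' b' = {e} ∧ ({a', b'} : Set ℝ) ∩ uIcc a b = {e'} := by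
  wlog hab : a ≤ b generalizing a b
  · simpa only [uIcc_comm b, pair_comm b] using this (uIcc_comm a b ▸ hx) (le_of_not_ge hab)
  wlog hab' : a' ≤ b' generalizing a' b'
  · simpa only [uIcc_comm b', pair_comm b'] using this (uIcc_comm a' b' ▸ hx') (le_of_not_ge hab')
  rw [uIcc_of_le hab, uIcc_of_le hab'] at *
  obtain ⟨hax, hxb⟩ := hx
  obtain ⟨hax', hxb'⟩ := hx'
  rcases lt_or_ge a a' with h₁ | h₁ <;> rcases lt_or_ge b b' with h₃ | h₃
  · exact Or.inr (Or.inr ⟨_, _, pair_inter_Icc_eq_singleton h₁ (by linarith) h₃⟩)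
  · exact Or.inr (Or.inl (Icc_subset_Icc h₁.le h₃))
  · exact Or.inl (Icc_subset_Icc h₁ h₃.le)
  · rcases h₁.lt_or_eq with h₁ | h₁
    · rcases h₃.lt_or_eq with h₃ | h₃
      · obtain ⟨h, h'⟩ := pair_inter_Icc_eq_singleton h₁ (by linarith) h₃
        exact Or.inr (Or.inr ⟨_, _, h', h⟩)
      · exact Or.inl (Icc_subset_Icc h₁.le h₃.ge)
    · exact Or.inr (Or.inl (Icc_subset_Icc h₁.ge h₃))

lemma mem_or_mem_of_pair_inter_eq_singleton {a b e : ℝ} {s : Set ℝ}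
    (h : ({a, b} : Set ℝ) ∩ s = {e}) : a ∈ s ∨ b ∈ s := by
  obtain ⟨rfl | rfl, he⟩ : e ∈ ({a, b} : Set ℝ) ∩ s := h ▸ rfl
  exacts [Or.inl he, Or.inr he]

lemma exists_mem_D_inter {S A : Set Pt} {u v : Pt} (hu : u ∈ S) (hv : v ∈ S)
    (h : u ∈ A ∨ v ∈ A) : ∃ w ∈ S, w ∈ D u v ∩ A := by
  rcases h with h | h
  exacts [⟨u, hu, left_mem_D u v, h⟩, ⟨v, hv, right_mem_D u v, h⟩]

lemma exists_mem_inter_of_not_piercingInter {S : Set Pt} {u v u' v' : Pt}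
    (hu : u ∈ S) (hv : v ∈ S) (hu' : u' ∈ S) (hv' : v' ∈ S)
    (hint : (D u v ∩ D u' v').Nonempty) (hp : ¬ PiercingInter (D u v) (D u' v'))
    (hc : ¬ CornerInter S (D u v) (D u' v')) : ∃ w ∈ S, w ∈ D u v ∩ D u' v' := by
  obtain ⟨z, ⟨hzx, hzy⟩, hzx', hzy'⟩ := hint
  have swap (h : ∃ w ∈ S, w ∈ D u' v' ∩ D u v) : ∃ w ∈ S, w ∈ D u v ∩ D u' v' := by
    rwa [inter_comm]
  rcases uIcc_subset_or_subset_or_crossing hzx hzx' with hx | hx | ⟨ex, ex', hex, hex'⟩ <;>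
    rcases uIcc_subset_or_subset_or_crossing hzy hzy' with hy | hy | ⟨ey, ey', hey, hey'⟩
  · exact exists_mem_D_inter hu hv (Or.inl ⟨hx left_mem_uIcc, hy left_mem_uIcc⟩)
  · exact absurd (Or.inl (pierces_prod nonempty_uIcc nonempty_uIcc hx hy)) hp
  · exact exists_mem_D_inter hu hv ((mem_or_mem_of_pair_inter_eq_singleton hey).imp
      (fun h => ⟨hx left_mem_uIcc, h⟩) (fun h => ⟨hx right_mem_uIcc, h⟩))
  · exact absurd (Or.inr (pierces_prod nonempty_uIcc nonempty_uIcc hx hy)) hp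
  · exact swap (exists_mem_D_inter hu' hv' (Or.inl ⟨hx left_mem_uIcc, hy left_mem_uIcc⟩))
  · exact swap (exists_mem_D_inter hu' hv' ((mem_or_mem_of_pair_inter_eq_singleton hey').imp
      (fun h => ⟨hx left_mem_uIcc, h⟩) (fun h => ⟨hx right_mem_uIcc, h⟩)))
  · exact exists_mem_D_inter hu hv ((mem_or_mem_of_pair_inter_eq_singleton hex).imp
      (fun h => ⟨h, hy left_mem_uIcc⟩) (fun h => ⟨h, hy right_mem_uIcc⟩))
  · exact swap (exists_mem_D_inter hu' hv' ((mem_or_mem_of_pair_inter_eq_singleton hex').imp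
      (fun h => ⟨h, hy left_mem_uIcc⟩) (fun h => ⟨h, hy right_mem_uIcc⟩)))
  · refine exists_mem_inter_of_not_cornerInter (corners_D_subset u v) (corners_D_subset u' v')
      (c := (ex', ey')) (c' := (ex, ey)) ?_ ?_ hc
    · rw [corners_D_inter_D, hex', hey', singleton_prod_singleton]
    · rw [corners_D_inter_D, hex, hey, singleton_prod_singleton]

lemma piercingInter_or_subset_of_nested {I I' J J' : Set ℝ} (hI : I.Nonempty) (hI' : I'.Nonempty)
    (hJ : J.Nonempty) (hJ' : J'.Nonempty) (hx : I ⊆ I' ∨ I' ⊆ I) (hy : J ⊆ J' ∨ J' ⊆ J) :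
    PiercingInter (I ×ˢ J) (I' ×ˢ J') ∨ I ×ˢ J ⊆ I' ×ˢ J' ∨ I' ×ˢ J' ⊆ I ×ˢ J := by
  rcases hx with hx | hx <;> rcases hy with hy | hy
  · exact Or.inr (Or.inl (prod_mono hx hy))
  · exact Or.inl (Or.inl (pierces_prod hI hJ' hx hy))
  · exact Or.inl (Or.inr (pierces_prod hI' hJ hx hy))
  · exact Or.inr (Or.inr (prod_mono hx hy))

lemma uIcc_subset_or_subset_of_same_side {w a b : ℝ} (h : (w ≤ a ∧ w ≤ b) ∨ (a ≤ w ∧ b ≤ w)) :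
    uIcc w a ⊆ uIcc w b ∨ uIcc w b ⊆ uIcc w a := by
  rcases le_total a b with hab | hab <;> rcases h with ⟨ha, hb⟩ | ⟨ha, hb⟩
  · exact Or.inl (uIcc_subset_uIcc_left (mem_uIcc.2 (Or.inl ⟨ha, hab⟩)))
  · exact Or.inr (uIcc_subset_uIcc_left (mem_uIcc.2 (Or.inr ⟨hab, hb⟩)))
  · exact Or.inr (uIcc_subset_uIcc_left (mem_uIcc.2 (Or.inl ⟨hb, hab⟩)))
  · exact Or.inl (uIcc_subset_uIcc_left (mem_uIcc.2 (Or.inr ⟨hab, ha⟩)))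

lemma eq_of_shared_corner {S : Set Pt} {w p p' : Pt} (hp : D w p ∩ S = {w, p})
    (hp' : D w p' ∩ S = {w, p'}) (hpw : p ≠ w) (hp'w : p' ≠ w)
    (hx : (w.1 ≤ p.1 ∧ w.1 ≤ p'.1) ∨ (p.1 ≤ w.1 ∧ p'.1 ≤ w.1))
    (hy : (w.2 ≤ p.2 ∧ w.2 ≤ p'.2) ∨ (p.2 ≤ w.2 ∧ p'.2 ≤ w.2))
    (hnp : ¬ PiercingInter (D w p) (D w p')) : p = p' := by
  have eq_of_subset {q q' : Pt} (hq : D w q ∩ S = {w, q}) (hq' : D w q' ∩ S = {w, q'})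
      (hqw : q ≠ w) (hsub : D w q ⊆ D w q') : q = q' := by
    have hqS : q ∈ D w q ∩ S := hq ▸ Or.inr rfl
    have : q ∈ D w q' ∩ S := ⟨hsub hqS.1, hqS.2⟩
    rw [hq'] at this
    exact this.resolve_left hqw
  rcases piercingInter_or_subset_of_nested nonempty_uIcc nonempty_uIcc nonempty_uIcc nonempty_uIcc
    (uIcc_subset_or_subset_of_same_side hx) (uIcc_subset_or_subset_of_same_side hy) with h | h | h
  · exact absurd h hnp
  · exact eq_of_subset hp hp' hpw h
  · exact (eq_of_subset hp' hp hp'w h).symm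

lemma exists_pairwise_not_rel_ncard_le_two_mul {α β : Type*} [LinearOrder β]
    {r : α → α → Prop} {f : α → β} {G : Set α} (hG : G.Finite)
    (hf : ∀ a ∈ G, ∀ b ∈ G, r a b → f a < f b)
    (hr : ∀ a ∈ G, ∀ b ∈ G, ∀ c ∈ G, r a b → r a c → b = c) :
    ∃ I ⊆ G, I.Pairwise (fun a b => ¬ r a b) ∧ G.ncard ≤ 2 * I.ncard := by
  induction hn : G.ncard using Nat.strong_induction_on generalizing G with
  | _ n ih =>
  subst hn
  rcases G.eq_empty_or_nonempty with rfl | hne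
  · exact ⟨∅, empty_subset _, pairwise_empty _, by simp⟩
  obtain ⟨a, ha, hmin⟩ := G.exists_min_image f hG hne
  set N := {b ∈ G | r a b}
  have hN : N.ncard ≤ 1 :=
    (ncard_le_one (hG.subset (sep_subset G _))).2 fun b hb c hc => hr a ha b hb.1 c hc.1 hb.2 hc.2
  have hG' : G \ insert a N ⊆ G := sdiff_subset
  have hcard : G.ncard ≤ (G \ insert a N).ncard + 2 := by
    have := ncard_le_ncard_sdiff_add_ncard G (insert a N) ((hG.subset (sep_subset G _)).insert a)
    have := ncard_insert_le a N
    omega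
  have hlt : (G \ insert a N).ncard < G.ncard :=
    ncard_lt_ncard (sdiff_ssubset_left_iff.2 ⟨a, ha, mem_insert a N⟩) hG
  obtain ⟨I, hIG, hI, hIcard⟩ := ih _ hlt (hG.subset hG')
    (fun a ha b hb => hf a (hG' ha) b (hG' hb))
    (fun a ha b hb c hc => hr a (hG' ha) b (hG' hb) c (hG' hc)) rfl
  have haI : a ∉ I := fun h => (hIG h).2 (mem_insert a N)
  refine ⟨insert a I, insert_subset ha (hIG.trans hG'), ?_, ?_⟩
  · refine hI.insert fun b hb _ => ⟨fun hab => (hIG hb).2 (Or.inr ⟨(hIG hb).1, hab⟩),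
      fun hba => (hf b (hG' (hIG hb)) a ha hba).not_ge (hmin b (hG' (hIG hb)))⟩
  · rw [ncard_insert_of_notMem haI ((hG.subset hG').subset hIG)]
    omega

open Classical in
/-- Red rectangles of `𝓡₁` run from their top-left to their bottom-right spanning point; negating
the `y`-coordinate of red points makes every rectangle of `𝓡₁` run to the upper right. -/
noncomputable def height (B : Set Pt) (p : Pt) : ℝ := if p ∈ B then p.2 else -p.2

noncomputable def potential (B : Set Pt) (p : Pt) : ℝ := p.1 + height B p

structure IsOrientedDiagonal (S B A : Set Pt) (u v : Pt) : Prop where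
  eq_D : A = D u v
  inter_eq : A ∩ S = {u, v}
  ne : u ≠ v
  mem_iff : u ∈ B ↔ v ∈ B
  fst_le : u.1 ≤ v.1
  height_le : height B u ≤ height B v

namespace IsOrientedDiagonal

variable {S B A A' : Set Pt} {u v u' v' : Pt}

lemma tail_mem (h : IsOrientedDiagonal S B A u v) : u ∈ S :=
  (h.inter_eq.symm ▸ Or.inl rfl : u ∈ A ∩ S).2

lemma head_mem (h : IsOrientedDiagonal S B A u v) : v ∈ S :=
  (h.inter_eq.symm ▸ Or.inr rfl : v ∈ A ∩ S).2

lemma potential_lt (h : IsOrientedDiagonal S B A u v) : potential B u < potential B v := by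
  refine (add_le_add h.fst_le h.height_le).lt_of_ne fun heq => h.ne (Prod.ext ?_ ?_)
  · linarith [h.fst_le, h.height_le]
  · have hh : height B u = height B v := by linarith [h.fst_le, h.height_le]
    by_cases hu : u ∈ B
    · simpa [height, hu, h.mem_iff.1 hu] using hh
    · simpa [height, hu, mt h.mem_iff.2 hu] using hh

lemma eq_of_tail_eq (h : IsOrientedDiagonal S B A u v) (h' : IsOrientedDiagonal S B A' u v')
    (hnp : ¬ PiercingInter A A') : A = A' := by
  have hy : (u.2 ≤ v.2 ∧ u.2 ≤ v'.2) ∨ (v.2 ≤ u.2 ∧ v'.2 ≤ u.2) := by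
    have h₁ := h.height_le
    have h₂ := h'.height_le
    by_cases hu : u ∈ B
    · simp only [height, hu, h.mem_iff.1 hu, h'.mem_iff.1 hu, if_true] at h₁ h₂
      exact Or.inl ⟨h₁, h₂⟩
    · simp only [height, hu, mt h.mem_iff.2 hu, mt h'.mem_iff.2 hu, if_false] at h₁ h₂
      exact Or.inr ⟨by linarith, by linarith⟩
  rw [h.eq_D, h'.eq_D] at hnp ⊢
  rw [eq_of_shared_corner (h.eq_D ▸ h.inter_eq) (h'.eq_D ▸ h'.inter_eq) h.ne.symm h'.ne.symm
    (Or.inl ⟨h.fst_le, h'.fst_le⟩) hy hnp]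

lemma eq_of_head_eq (h : IsOrientedDiagonal S B A u v) (h' : IsOrientedDiagonal S B A' u' v)
    (hnp : ¬ PiercingInter A A') : A = A' := by
  have hy : (v.2 ≤ u.2 ∧ v.2 ≤ u'.2) ∨ (u.2 ≤ v.2 ∧ u'.2 ≤ v.2) := by
    have h₁ := h.height_le
    have h₂ := h'.height_le
    by_cases hv : v ∈ B
    · simp only [height, hv, h.mem_iff.2 hv, h'.mem_iff.2 hv, if_true] at h₁ h₂
      exact Or.inr ⟨h₁, h₂⟩
    · simp only [height, hv, mt h.mem_iff.1 hv, mt h'.mem_iff.1 hv, if_false] at h₁ h₂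
      exact Or.inl ⟨by linarith, by linarith⟩
  rw [h.eq_D, h'.eq_D, D_comm u, D_comm u'] at hnp ⊢
  rw [eq_of_shared_corner (by rw [← D_comm, ← h.eq_D, h.inter_eq, pair_comm])
    (by rw [← D_comm, ← h'.eq_D, h'.inter_eq, pair_comm]) h.ne h'.ne
    (Or.inr ⟨h.fst_le, h'.fst_le⟩) hy hnp]

lemma head_eq_tail_or_tail_eq_head (h : IsOrientedDiagonal S B A u v)
    (h' : IsOrientedDiagonal S B A' u' v') (hne : A ≠ A') (hint : (A ∩ A').Nonempty)
    (hnp : ¬ PiercingInter A A') (hnc : ¬ CornerInter S A A') : v = u' ∨ u = v' := by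
  obtain ⟨w, hwS, hwA, hwA'⟩ := exists_mem_inter_of_not_piercingInter h.tail_mem h.head_mem
    h'.tail_mem h'.head_mem (by rwa [← h.eq_D, ← h'.eq_D]) (by rwa [← h.eq_D, ← h'.eq_D])
    (by rwa [← h.eq_D, ← h'.eq_D])
  have hw : w ∈ A ∩ S := ⟨h.eq_D ▸ hwA, hwS⟩
  have hw' : w ∈ A' ∩ S := ⟨h'.eq_D ▸ hwA', hwS⟩
  rw [h.inter_eq] at hw
  rw [h'.inter_eq] at hw'
  rcases hw with rfl | rfl <;> rcases hw' with hw' | hw'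
  · exact absurd (h.eq_of_tail_eq (hw' ▸ h') hnp) hne
  · exact Or.inr hw'
  · exact Or.inl hw'
  · exact absurd (h.eq_of_head_eq (hw' ▸ h') hnp) hne

end IsOrientedDiagonal

lemma exists_isOrientedDiagonal_of_mem_fam1 {R B A : Set Pt} (hdisj : R ∩ B = ∅)
    (hA : A ∈ Fam1 R B) : ∃ u v, IsOrientedDiagonal (R ∪ B) B A u v := by
  rcases hA with ⟨p, q, hp, hq, hpq, rfl, hS, hc⟩ | ⟨p, q, hp, hq, hpq, rfl, hS, hc⟩
  · have hcorner : ((min p.1 q.1, min p.2 q.2) : Pt) ∈ D p q ∩ (R ∪ B) :=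
      ⟨⟨⟨le_rfl, min_le_max⟩, le_rfl, min_le_max⟩, hc⟩
    rw [hS, mem_insert_iff, mem_singleton_iff] at hcorner
    rcases hcorner with h | h <;> simp only [Prod.ext_iff, min_eq_left_iff, min_eq_right_iff] at h
    · exact ⟨p, q, rfl, hS, hpq, iff_of_true hp hq, h.1, by simp [height, hp, hq, h.2]⟩
    · exact ⟨q, p, D_comm p q, by rw [hS, pair_comm], hpq.symm, iff_of_true hq hp, h.1,
        by simp [height, hp, hq, h.2]⟩
  · have hpB : p ∉ B := fun h => hdisj.subset ⟨hp, h⟩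
    have hqB : q ∉ B := fun h => hdisj.subset ⟨hq, h⟩
    have hcorner : ((max p.1 q.1, min p.2 q.2) : Pt) ∈ D p q ∩ (R ∪ B) :=
      ⟨⟨⟨min_le_max, le_rfl⟩, le_rfl, min_le_max⟩, hc⟩
    rw [hS, mem_insert_iff, mem_singleton_iff] at hcorner
    rcases hcorner with h | h <;>
      simp only [Prod.ext_iff, max_eq_left_iff, max_eq_right_iff, min_eq_left_iff,
        min_eq_right_iff] at h
    · exact ⟨q, p, D_comm p q, by rw [hS, pair_comm], hpq.symm, iff_of_false hqB hpB, h.1,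
        by simp [height, hpB, hqB, h.2]⟩
    · exact ⟨p, q, rfl, hS, hpq, iff_of_false hpB hqB, h.1, by simp [height, hpB, hqB, h.2]⟩

theorem stmt8_general (R B : Set Pt) (hdisj : R ∩ B = ∅)
    (H : Set (Set Pt)) (hHfin : H.Finite) (hH : H ⊆ Fam1 R B)
    (hnoadj : H.Pairwise fun A A' =>
      ¬ PiercingInter A A' ∧ ¬ CornerInter (R ∪ B) A A') :
    ∃ I ⊆ H, (I.Pairwise fun A A' => A ∩ A' = ∅) ∧ H.ncard ≤ 2 * I.ncard := by
  choose! u v huv using fun A (hA : A ∈ H) => exists_isOrientedDiagonal_of_mem_fam1 hdisj (hH hA)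
  obtain ⟨I, hIH, hI, hcard⟩ := exists_pairwise_not_rel_ncard_le_two_mul
    (r := fun A A' => v A = u A') (f := fun A => potential B (u A) + potential B (v A)) hHfin
    (fun A hA A' hA' (hvu : v A = u A') => by
      linarith [(huv A hA).potential_lt, (huv A' hA').potential_lt, congrArg (potential B) hvu])
    (fun A hA A₁ hA₁ A₂ hA₂ h₁ h₂ => by
      by_contra hne
      exact hne ((huv A₁ hA₁).eq_of_tail_eq (h₁ ▸ h₂ ▸ huv A₂ hA₂) (hnoadj hA₁ hA₂ hne).1))
  refine ⟨I, hIH, fun A hA A' hA' hne => not_nonempty_iff_eq_empty.1 fun hint => ?_, hcard⟩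
  have hadj := hnoadj (hIH hA) (hIH hA') hne
  rcases (huv A (hIH hA)).head_eq_tail_or_tail_eq_head (huv A' (hIH hA')) hne hint hadj.1
    hadj.2 with h | h
  exacts [hI hA hA' hne h, hI hA' hA hne.symm h.symm]

/-- If no two elements of a finite `H ⊆ 𝓡₁` have a piercing or
a corner intersection, then `H` has a subfamily `I` of pairwise-disjoint
rectangles with `2|I| ≥ |H|`. -/
theorem stmt8 (R B : Set Pt) (hfin : (R ∪ B).Finite) (hdisj : R ∩ B = ∅)
    (H : Set (Set Pt)) (hHfin : H.Finite) (hH : H ⊆ Fam1 R B)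
    (hnoadj : H.Pairwise fun A A' =>
      ¬ PiercingInter A A' ∧ ¬ CornerInter (R ∪ B) A A') :
    ∃ I ⊆ H, (I.Pairwise fun A A' => A ∩ A' = ∅) ∧ H.ncard ≤ 2 * I.ncard :=
  stmt8_general R B hdisj H hHfin hH hnoadj
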